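/- arXiv:1511.00425 — 3 statements merged into one kernel-verified Lean document; each statement's English description precedes it below -/
import Mathlib

section
/- With Q₁ := τ⁻¹I − δA*A positive semidefinite (τδ ≤ 1/‖A‖²), the minimizer of u ↦ (δ/2)‖Au − c₁‖² + ⟨μ, Au⟩ + H(u) + (1/2)‖u − u⁰‖²_{Q₁} equals the proximal point (I + τ∂H)⁻¹(u⁰ − τA*(μ + δ(Au⁰ − c₁))). In particular, when c₁ = Au⁰ − r for residual r, the update reduces to (I + τ∂H)⁻¹(u⁰ − τA*(μ + δr)). -/
/-!
The preconditioner `Q₁ = τ⁻¹I − δA*A` is chosen so that its `−δA*A` part cancels the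
Hessian of `u ↦ (δ/2)‖Au − c₁‖²`. The smooth part of the objective is therefore its
linearisation at `u⁰` plus `‖u − u⁰‖²/(2τ)`, and completing the square turns this into
a constant plus `‖u − w‖²/(2τ)` with `w = u⁰ − τA*(μ + δ(Au⁰ − c₁))`. Multiplying by
`τ > 0` identifies the minimisers of the objective with the proximal points of `τH` at `w`.
-/

open scoped RealInnerProductSpace

/-- A function to `EReal` is proper if it never takes the value `⊥` and is somewhere
finite. -/
def EProper {H : Type*} (f : H → EReal) : Prop :=
  (∀ x, f x ≠ ⊥) ∧ ∃ x, f x ≠ ⊤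

/-- Convexity for extended-real-valued functions. -/
def EConvexOn {H : Type*} [AddCommGroup H] [Module ℝ H] (f : H → EReal) : Prop :=
  ∀ x y : H, ∀ a b : ℝ, 0 ≤ a → 0 ≤ b → a + b = 1 →
    f (a • x + b • y) ≤ (a : EReal) * f x + (b : EReal) * f y

/-- The convex subdifferential of `f : H → EReal` at `x`. -/
def ESubdiff {H : Type*} [NormedAddCommGroup H] [InnerProductSpace ℝ H]
    (f : H → EReal) (x : H) : Set H :=
  {g | ∀ y, f x + ((⟪g, y - x⟫ : ℝ) : EReal) ≤ f y}

/-- `u` is a proximal point of `f` with parameter `α` at `w`, i.e. a minimiser of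
`v ↦ (1/2)‖v − w‖² + α f(v)`; single-valuedness makes this the resolvent
`(I + α ∂f)⁻¹(w)`. -/
def IsProxPt {H : Type*} [NormedAddCommGroup H] [InnerProductSpace ℝ H]
    (f : H → EReal) (α : ℝ) (w u : H) : Prop :=
  ∀ v : H, ((1 / 2 * ‖u - w‖ ^ 2 : ℝ) : EReal) + (α : EReal) * f u ≤
    ((1 / 2 * ‖v - w‖ ^ 2 : ℝ) : EReal) + (α : EReal) * f v

/-- The convex (Fenchel) conjugate of `f : H → EReal`. -/
noncomputable def EConj {H : Type*} [NormedAddCommGroup H] [InnerProductSpace ℝ H]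
    (f : H → EReal) (μ : H) : EReal :=
  ⨆ v : H, ((⟪μ, v⟫ : ℝ) : EReal) - f v

namespace EReal

lemma coe_add_le_coe_add_iff (c : ℝ) {x y : EReal} : (c : EReal) + x ≤ c + y ↔ x ≤ y :=
  StrictMono.le_iff_le (f := fun x : EReal ↦ (c : EReal) + x)
    fun _ _ h ↦ add_lt_add_left_coe h c

lemma coe_mul_le_coe_mul_iff_of_pos {τ : ℝ} (hτ : 0 < τ) {x y : EReal} :
    (τ : EReal) * x ≤ τ * y ↔ x ≤ y := by
  refine ⟨fun h ↦ ?_, fun h ↦ mul_le_mul_of_nonneg_left h (by exact_mod_cast hτ.le)⟩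
  have h' := mul_le_mul_of_nonneg_left h (show (0 : EReal) ≤ (τ⁻¹ : ℝ) by
    exact_mod_cast inv_nonneg.2 hτ.le)
  rwa [← mul_assoc, ← mul_assoc, ← coe_mul, inv_mul_cancel₀ hτ.ne', coe_one, one_mul,
    one_mul] at h'

end EReal

lemma isProxPt_iff_forall_le {H : Type*} [NormedAddCommGroup H] [InnerProductSpace ℝ H]
    {f : H → EReal} {α : ℝ} (hα : 0 < α) {w u : H} :
    IsProxPt f α w u ↔ ∀ v : H, ((‖u - w‖ ^ 2 / (2 * α) : ℝ) : EReal) + f u ≤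
      ((‖v - w‖ ^ 2 / (2 * α) : ℝ) : EReal) + f v := by
  have hscale : ∀ v : H, ((1 / 2 * ‖v - w‖ ^ 2 : ℝ) : EReal) + α * f v
      = α * (((‖v - w‖ ^ 2 / (2 * α) : ℝ) : EReal) + f v) := fun v ↦ by
    rw [EReal.left_distrib_of_nonneg_of_ne_top (by exact_mod_cast hα.le) (EReal.coe_ne_top α),
      ← EReal.coe_mul]
    congr 2
    field_simp
  simp only [IsProxPt, hscale, EReal.coe_mul_le_coe_mul_iff_of_pos hα]

lemma inner_add_sq_norm_div_eq {U : Type*} [NormedAddCommGroup U] [InnerProductSpace ℝ U]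
    {τ : ℝ} (hτ : τ ≠ 0) (g d : U) :
    ⟪g, d⟫ + ‖d‖ ^ 2 / (2 * τ) = ‖d + τ • g‖ ^ 2 / (2 * τ) - τ / 2 * ‖g‖ ^ 2 := by
  rw [norm_add_sq_real, norm_smul, inner_smul_right, real_inner_comm, Real.norm_eq_abs,
    mul_pow, sq_abs]
  field_simp
  ring

section Quadratic

variable {U V : Type*} [NormedAddCommGroup U] [InnerProductSpace ℝ U] [CompleteSpace U]
  [NormedAddCommGroup V] [InnerProductSpace ℝ V] [CompleteSpace V]

lemma linearize_sq_norm_map_sub (A : U →L[ℝ] V) (δ : ℝ) (c μ : V) (u u0 : U) :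
    δ / 2 * ‖A u - c‖ ^ 2 + ⟪μ, A u⟫ - δ / 2 * ‖A (u - u0)‖ ^ 2
      = δ / 2 * ‖A u0 - c‖ ^ 2 + ⟪μ, A u0⟫ + ⟪A.adjoint (μ + δ • (A u0 - c)), u - u0⟫ := by
  rw [ContinuousLinearMap.adjoint_inner_left, map_sub,
    show A u - c = (A u0 - c) + (A u - A u0) by abel, norm_add_sq_real]
  simp only [inner_add_left, inner_sub_right, real_inner_smul_left]
  ring

lemma linearized_objective_eq_const_add_sq_norm (A : U →L[ℝ] V) {δ τ : ℝ} (hτ : τ ≠ 0)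
    (c μ : V) (u u0 : U) :
    δ / 2 * ‖A u - c‖ ^ 2 + ⟪μ, A u⟫ + 1 / 2 * (τ⁻¹ * ‖u - u0‖ ^ 2 - δ * ‖A (u - u0)‖ ^ 2)
      = (δ / 2 * ‖A u0 - c‖ ^ 2 + ⟪μ, A u0⟫ - τ / 2 * ‖A.adjoint (μ + δ • (A u0 - c))‖ ^ 2)
        + ‖u - (u0 - τ • A.adjoint (μ + δ • (A u0 - c)))‖ ^ 2 / (2 * τ) := by
  set g := A.adjoint (μ + δ • (A u0 - c))
  rw [show u - (u0 - τ • g) = (u - u0) + τ • g by abel]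
  linear_combination
    linearize_sq_norm_map_sub A δ c μ u u0 + inner_add_sq_norm_div_eq hτ g (u - u0)

end Quadratic

theorem preconditioned_update_is_prox_general
    {U V : Type*} [NormedAddCommGroup U] [InnerProductSpace ℝ U] [CompleteSpace U]
    [NormedAddCommGroup V] [InnerProductSpace ℝ V] [CompleteSpace V]
    (Hf : U → EReal)
    (A : U →L[ℝ] V) (δ τ : ℝ) (hτ : 0 < τ)
    (c₁ μ : V) (u0 : U)
    (Φ : U → EReal)
    (hΦ : ∀ u : U, Φ u =
      ((δ / 2 * ‖A u - c₁‖ ^ 2 + ⟪μ, A u⟫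
        + 1 / 2 * (τ⁻¹ * ‖u - u0‖ ^ 2 - δ * ‖A (u - u0)‖ ^ 2) : ℝ) : EReal) + Hf u) :
    (∀ u : U, (∀ v : U, Φ u ≤ Φ v) ↔
      IsProxPt Hf τ (u0 - τ • A.adjoint (μ + δ • (A u0 - c₁))) u) ∧
    (∀ r : V, c₁ = A u0 - r →
      ∀ u : U, (∀ v : U, Φ u ≤ Φ v) ↔
        IsProxPt Hf τ (u0 - τ • A.adjoint (μ + δ • r)) u) := by
  have hmin : ∀ u : U, (∀ v : U, Φ u ≤ Φ v) ↔
      IsProxPt Hf τ (u0 - τ • A.adjoint (μ + δ • (A u0 - c₁))) u := fun u ↦ by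
    simp only [isProxPt_iff_forall_le hτ, hΦ,
      linearized_objective_eq_const_add_sq_norm A hτ.ne', EReal.coe_add, add_assoc,
      EReal.coe_add_le_coe_add_iff]
  refine ⟨hmin, fun r hr ↦ ?_⟩
  rwa [hr, sub_sub_cancel] at hmin

/-- With `Q₁ = τ⁻¹I − δA*A` positive semidefinite (`τδ‖A‖² ≤ 1`), `u`
minimises `(δ/2)‖Au − c₁‖² + ⟪μ, Au⟫ + H(u) + (1/2)‖u − u⁰‖²_{Q₁}` iff
`u = (I + τ∂H)⁻¹(u⁰ − τA*(μ + δ(Au⁰ − c₁)))`; in particular for `c₁ = Au⁰ − r` the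
update is `(I + τ∂H)⁻¹(u⁰ − τA*(μ + δr))`. -/
theorem preconditioned_update_is_prox
    {U V : Type*} [NormedAddCommGroup U] [InnerProductSpace ℝ U] [CompleteSpace U]
    [NormedAddCommGroup V] [InnerProductSpace ℝ V] [CompleteSpace V]
    (Hf : U → EReal) (hprop : EProper Hf) (hconv : EConvexOn Hf)
    (hlsc : LowerSemicontinuous Hf)
    (A : U →L[ℝ] V) (δ τ : ℝ) (hδ : 0 < δ) (hτ : 0 < τ)
    (hpsd : τ * δ * ‖A‖ ^ 2 ≤ 1) (c₁ μ : V) (u0 : U)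
    (Φ : U → EReal)
    (hΦ : ∀ u : U, Φ u =
      ((δ / 2 * ‖A u - c₁‖ ^ 2 + ⟪μ, A u⟫
        + 1 / 2 * (τ⁻¹ * ‖u - u0‖ ^ 2 - δ * ‖A (u - u0)‖ ^ 2) : ℝ) : EReal) + Hf u) :
    (∀ u : U, (∀ v : U, Φ u ≤ Φ v) ↔
      IsProxPt Hf τ (u0 - τ • A.adjoint (μ + δ • (A u0 - c₁))) u) ∧
    (∀ r : V, c₁ = A u0 - r →
      ∀ u : U, (∀ v : U, Φ u ≤ Φ v) ↔
        IsProxPt Hf τ (u0 - τ • A.adjoint (μ + δ • r)) u) :=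
  preconditioned_update_is_prox_general Hf A δ τ hτ c₁ μ u0 Φ hΦ
end

section
/- Consider one iteration of the simplified algorithm of Section 5 for F(u,v) = G(u) − v: μ^{k+1} = (I + δ∂J*)⁻¹(μᵏ + δG(uᵏ)), μ̄^{k+1} = 2μ^{k+1} − μᵏ, u^{k+1} = (I + τ∂H)⁻¹(uᵏ − τ∇G(uᵏ)*μ̄^{k+1}). Then (μ^{k+1}, u^{k+1}) satisfies the implicit inclusion 0 ∈ N(μ^{k+1}, u^{k+1}) + Lᵏ(μ^{k+1} − μᵏ, u^{k+1} − uᵏ), where N(μ, u) = (∂J*(μ) − ∇G(uᵏ)u − cᵏ, ∂H(u) + ∇G(uᵏ)*μ), cᵏ = G(uᵏ) − ∇G(uᵏ)uᵏ, and Lᵏ = [[δ⁻¹I, ∇G(uᵏ)], [∇G(uᵏ)*, τ⁻¹I]]. -/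
open scoped RealInnerProductSpace

/-!
A proximal point `u` of `f` at `w` with step `α` satisfies `(w - u) / α ∈ ∂f(u)`: comparing the
proximal objective at `u` with its value at `u + t (y - u)` and using convexity of `f` gives
`α (f u - f y) ≤ ⟪u - w, y - u⟫ + t ‖y - u‖² / 2`, and `t → 0⁺` yields the subgradient
inequality. The conjugate `J*` is again convex and proper, so both proximal steps produce
subgradients `p ∈ ∂J*(μ^{k+1})`, `q ∈ ∂H(u^{k+1})`, and the two components of the inclusion are
then linear identities in `p`, `q`.
-/

open Filter Set Topology

lemma le_of_forall_mem_Ioc_le_add_mul {a b c : ℝ} (h : ∀ t ∈ Ioc (0 : ℝ) 1, a ≤ b + t * c) :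
    a ≤ b := by
  have hlim : Tendsto (fun t : ℝ => b + t * c) (𝓝[>] 0) (𝓝 b) := by
    simpa using (tendsto_const_nhds.add (tendsto_id.mul_const c)).mono_left
      (nhdsWithin_le_nhds (a := (0 : ℝ)))
  exact ge_of_tendsto hlim (eventually_of_mem (Ioc_mem_nhdsGT zero_lt_one) h)

section Conjugate

variable {H : Type*} [NormedAddCommGroup H] [InnerProductSpace ℝ H] {f : H → EReal}

lemma le_eConj (μ v : H) : ((⟪μ, v⟫ : ℝ) : EReal) - f v ≤ EConj f μ :=
  le_iSup (fun v : H => ((⟪μ, v⟫ : ℝ) : EReal) - f v) v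

lemma eConj_ne_bot (hfin : ∃ x, f x ≠ ⊤) (μ : H) : EConj f μ ≠ ⊥ := by
  obtain ⟨x, hx⟩ := hfin
  refine ne_bot_of_le_ne_bot ?_ (le_eConj μ x)
  exact EReal.add_ne_bot_iff.2 ⟨EReal.coe_ne_bot _, by rwa [ne_eq, EReal.neg_eq_bot_iff]⟩

lemma eConvexOn_eConj (hbot : ∀ x, f x ≠ ⊥) : EConvexOn (EConj f) := by
  intro x y a b ha hb hab
  refine iSup_le fun v => ?_
  rcases eq_or_ne (f v) ⊤ with hv | hv
  · simp [hv]
  obtain ⟨r, hr⟩ : ∃ r : ℝ, f v = r := ⟨(f v).toReal, (EReal.coe_toReal hv (hbot v)).symm⟩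
  have hx := le_eConj (f := f) x v
  have hy := le_eConj (f := f) y v
  rw [hr, ← EReal.coe_sub] at hx hy
  have haffine : ⟪a • x + b • y, v⟫ - r = a * (⟪x, v⟫ - r) + b * (⟪y, v⟫ - r) := by
    rw [inner_add_left, real_inner_smul_left, real_inner_smul_left]
    linear_combination r * hab
  rw [hr, ← EReal.coe_sub, haffine, EReal.coe_add, EReal.coe_mul, EReal.coe_mul]
  gcongr

end Conjugate

section Prox

variable {H : Type*} [NormedAddCommGroup H] [InnerProductSpace ℝ H] {f : H → EReal} {α : ℝ}
  {w u : H}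

lemma IsProxPt.ne_top (h : IsProxPt f α w u) (hα : 0 < α) {y : H} (hy : f y ≠ ⊤) :
    f u ≠ ⊤ := by
  intro hu
  have hle := h y
  rw [hu, EReal.coe_mul_top_of_pos hα, EReal.coe_add_top, top_le_iff] at hle
  refine EReal.add_ne_top (EReal.coe_ne_top _) ?_ hle
  exact (EReal.mul_ne_top _ _).2 ⟨.inl (EReal.coe_ne_bot _),
    .inl (EReal.coe_nonneg.2 hα.le), .inl (EReal.coe_ne_top _), .inr hy⟩

lemma IsProxPt.mul_sub_le_inner_add (h : IsProxPt f α w u) (hconv : EConvexOn f) (hα : 0 ≤ α)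
    {y : H} {a b : ℝ} (hu : f u = a) (hy : f y = b) {t : ℝ} (ht : t ∈ Ioc (0 : ℝ) 1) :
    α * (a - b) ≤ ⟪u - w, y - u⟫ + t * (‖y - u‖ ^ 2 / 2) := by
  obtain ⟨ht0, ht1⟩ := ht
  have hconv' := hconv u y (1 - t) t (by linarith) ht0.le (by ring)
  rw [show (1 - t) • u + t • y = u + t • (y - u) by module, hu, hy, ← EReal.coe_mul,
    ← EReal.coe_mul, ← EReal.coe_add] at hconv'
  have hprox := (h (u + t • (y - u))).trans
    (add_le_add_right (mul_le_mul_of_nonneg_left hconv' (EReal.coe_nonneg.2 hα)) _)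
  rw [hu, ← EReal.coe_mul, ← EReal.coe_mul, ← EReal.coe_add, ← EReal.coe_add,
    EReal.coe_le_coe_iff] at hprox
  have hnorm : ‖u + t • (y - u) - w‖ ^ 2
      = ‖u - w‖ ^ 2 + 2 * t * ⟪u - w, y - u⟫ + t ^ 2 * ‖y - u‖ ^ 2 := by
    rw [show u + t • (y - u) - w = (u - w) + t • (y - u) by abel, norm_add_sq_real,
      real_inner_smul_right, norm_smul, mul_pow, Real.norm_eq_abs, sq_abs]
    ring
  rw [hnorm] at hprox
  refine le_of_mul_le_mul_left ?_ ht0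
  linarith

theorem IsProxPt.inv_smul_sub_mem_eSubdiff (h : IsProxPt f α w u) (hbot : ∀ x, f x ≠ ⊥)
    (hconv : EConvexOn f) (hα : 0 < α) : α⁻¹ • (w - u) ∈ ESubdiff f u := by
  intro y
  rcases eq_or_ne (f y) ⊤ with hy | hy
  · simp [hy]
  obtain ⟨b, hb⟩ : ∃ b : ℝ, f y = b := ⟨_, (EReal.coe_toReal hy (hbot y)).symm⟩
  obtain ⟨a, ha⟩ : ∃ a : ℝ, f u = a := ⟨_, (EReal.coe_toReal (h.ne_top hα hy) (hbot u)).symm⟩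
  have hkey : α * (a - b) ≤ ⟪u - w, y - u⟫ :=
    le_of_forall_mem_Ioc_le_add_mul fun t ht => h.mul_sub_le_inner_add hconv hα.le ha hb ht
  rw [ha, hb, ← EReal.coe_add, EReal.coe_le_coe_iff, real_inner_smul_left, ← neg_sub u w,
    inner_neg_left]
  have hkey' : a - b ≤ α⁻¹ * ⟪u - w, y - u⟫ := (le_inv_mul_iff₀ hα).2 hkey
  linarith

end Prox

theorem simplified_iteration_solves_preconditioned_inclusion_general
    {U V : Type*} [NormedAddCommGroup U] [InnerProductSpace ℝ U] [CompleteSpace U]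
    [NormedAddCommGroup V] [InnerProductSpace ℝ V] [CompleteSpace V]
    (Hf : U → EReal) (J : V → EReal)
    (hHprop : EProper Hf) (hHconv : EConvexOn Hf)
    (hJprop : EProper J)
    (G : U → V) (uk : U) (K : U →L[ℝ] V)
    (δ τ : ℝ) (hδ : 0 < δ) (hτ : 0 < τ)
    (muk mu1 : V) (u1 : U)
    (hmu1 : IsProxPt (EConj J) δ (muk + δ • G uk) mu1)
    (hu1 : IsProxPt Hf τ (uk - τ • K.adjoint (2 • mu1 - muk)) u1) :
    ∃ p ∈ ESubdiff (EConj J) mu1, ∃ q ∈ ESubdiff Hf u1,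
      (p - K u1 - (G uk - K uk)) + (δ⁻¹ • (mu1 - muk) + K (u1 - uk)) = 0 ∧
      (q + K.adjoint mu1) + (K.adjoint (mu1 - muk) + τ⁻¹ • (u1 - uk)) = 0 := by
  have hp := hmu1.inv_smul_sub_mem_eSubdiff (eConj_ne_bot hJprop.2) (eConvexOn_eConj hJprop.1) hδ
  have hq := hu1.inv_smul_sub_mem_eSubdiff hHprop.1 hHconv hτ
  refine ⟨_, hp, _, hq, ?_, ?_⟩
  · simp only [map_sub, smul_sub, smul_add, smul_smul, inv_mul_cancel₀ hδ.ne', one_smul]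
    abel
  · simp only [map_sub, map_nsmul, smul_sub, smul_smul, inv_mul_cancel₀ hτ.ne', one_smul]
    abel

/-- one iteration of the simplified algorithm of Section 5,
`μ^{k+1} = (I + δ∂J*)⁻¹(μᵏ + δG(uᵏ))`, `μ̄^{k+1} = 2μ^{k+1} − μᵏ`,
`u^{k+1} = (I + τ∂H)⁻¹(uᵏ − τ∇G(uᵏ)*μ̄^{k+1})`, satisfies the implicit inclusion
`0 ∈ N(μ^{k+1}, u^{k+1}) + Lᵏ(μ^{k+1} − μᵏ, u^{k+1} − uᵏ)` where
`N(μ, u) = (∂J*(μ) − ∇G(uᵏ)u − cᵏ, ∂H(u) + ∇G(uᵏ)*μ)`, `cᵏ = G(uᵏ) − ∇G(uᵏ)uᵏ`, and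
`Lᵏ = [[δ⁻¹I, ∇G(uᵏ)], [∇G(uᵏ)*, τ⁻¹I]]`. -/
theorem simplified_iteration_solves_preconditioned_inclusion
    {U V : Type*} [NormedAddCommGroup U] [InnerProductSpace ℝ U] [CompleteSpace U]
    [NormedAddCommGroup V] [InnerProductSpace ℝ V] [CompleteSpace V]
    (Hf : U → EReal) (J : V → EReal)
    (hHprop : EProper Hf) (hHconv : EConvexOn Hf) (hHlsc : LowerSemicontinuous Hf)
    (hJprop : EProper J) (hJconv : EConvexOn J) (hJlsc : LowerSemicontinuous J)
    (G : U → V) (uk : U) (K : U →L[ℝ] V) (hK : HasFDerivAt G K uk)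
    (δ τ : ℝ) (hδ : 0 < δ) (hτ : 0 < τ)
    (muk mu1 : V) (u1 : U)
    (hmu1 : IsProxPt (EConj J) δ (muk + δ • G uk) mu1)
    (hu1 : IsProxPt Hf τ (uk - τ • K.adjoint (2 • mu1 - muk)) u1) :
    ∃ p ∈ ESubdiff (EConj J) mu1, ∃ q ∈ ESubdiff Hf u1,
      (p - K u1 - (G uk - K uk)) + (δ⁻¹ • (mu1 - muk) + K (u1 - uk)) = 0 ∧
      (q + K.adjoint mu1) + (K.adjoint (mu1 - muk) + τ⁻¹ • (u1 - uk)) = 0 :=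
  simplified_iteration_solves_preconditioned_inclusion_general Hf J hHprop hHconv hJprop G uk K δ τ
    hδ hτ muk mu1 u1 hmu1 hu1
end

section
/- If (û, v̂, μ̂) satisfies the KKT-type conditions 0 ∈ ∂H(û) + DG(û)*μ̂, 0 ∈ ∂J(v̂) − μ̂, and G(û) = v̂, then (û, v̂, μ̂) is a fixed point of the preconditioned ADMM iteration of Algorithm 1 for the constraint F(u,v) = G(u) − v = 0: i.e., starting from (uᵏ, vᵏ, μᵏ, μ̄ᵏ) = (û, v̂, μ̂, μ̂), the updates return (û, v̂, μ̂, μ̂). -/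
open scoped RealInnerProductSpace

lemma aux_ne_top {H : Type*} [NormedAddCommGroup H] [InnerProductSpace ℝ H]
    (f : H → EReal) (hprop : EProper f) (x g : H)
    (hg : g ∈ ESubdiff f x) : f x ≠ ⊤ := by
  intro htop
  obtain ⟨hbot, x₀, hx₀⟩ := hprop
  have := hg x₀
  rw [htop] at this
  have h2 : (⊤ : EReal) + ((⟪g, x₀ - x⟫ : ℝ) : EReal) = ⊤ := by
    exact EReal.top_add_of_ne_bot (by exact EReal.coe_ne_bot _)
  rw [h2, top_le_iff] at this
  exact hx₀ this

lemma prox_of_subgrad {H : Type*} [NormedAddCommGroup H] [InnerProductSpace ℝ H]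
    (f : H → EReal) (hprop : EProper f) (α : ℝ) (hα : 0 < α) (x g : H)
    (hg : g ∈ ESubdiff f x) : IsProxPt f α (x + α • g) x := by
  have hxt : f x ≠ ⊤ := aux_ne_top f hprop x g hg
  have hxb : f x ≠ ⊥ := hprop.1 x
  obtain ⟨r, hr⟩ : ∃ r : ℝ, f x = (r : EReal) := ⟨(f x).toReal, (EReal.coe_toReal hxt hxb).symm⟩
  intro v
  by_cases hv : f v = ⊤
  · rw [hv]
    have : (α : EReal) * ⊤ = ⊤ := EReal.coe_mul_top_of_pos hα
    rw [this, EReal.add_top_of_ne_bot (EReal.coe_ne_bot _)]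
    exact le_top
  · have hvb : f v ≠ ⊥ := hprop.1 v
    obtain ⟨s, hs⟩ : ∃ s : ℝ, f v = (s : EReal) := ⟨(f v).toReal, (EReal.coe_toReal hv hvb).symm⟩
    have hsub : r + ⟪g, v - x⟫ ≤ s := by
      have := hg v
      rw [hr, hs] at this
      exact_mod_cast this
    rw [hr, hs]
    have key : 1 / 2 * ‖x - (x + α • g)‖ ^ 2 + α * r ≤ 1 / 2 * ‖v - (x + α • g)‖ ^ 2 + α * s := by
      have e1 : x - (x + α • g) = -(α • g) := by abel
      have e2 : v - (x + α • g) = (v - x) - α • g := by abel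
      rw [e1, e2, norm_neg]
      have h3 : ‖(v - x) - α • g‖ ^ 2 = ‖v - x‖ ^ 2 - 2 * ⟪v - x, α • g⟫ + ‖α • g‖ ^ 2 := by
        rw [norm_sub_sq_real]
      have h4 : ⟪v - x, α • g⟫ = α * ⟪g, v - x⟫ := by
        rw [real_inner_smul_right, real_inner_comm]
      nlinarith [sq_nonneg ‖v - x‖, norm_nonneg (v - x), mul_le_mul_of_nonneg_left hsub hα.le]
    exact_mod_cast key

lemma prox_finite {H : Type*} [NormedAddCommGroup H] [InnerProductSpace ℝ H]
    (f : H → EReal) (hprop : EProper f) (α : ℝ) (hα : 0 < α) (w u : H)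
    (hu : IsProxPt f α w u) : ∃ r : ℝ, f u = (r : EReal) := by
  obtain ⟨hbot, x₀, hx₀⟩ := hprop
  obtain ⟨c, hc⟩ : ∃ c : ℝ, f x₀ = (c : EReal) := ⟨(f x₀).toReal, (EReal.coe_toReal hx₀ (hbot x₀)).symm⟩
  have := hu x₀
  rw [hc] at this
  have htop : f u ≠ ⊤ := by
    intro ht
    rw [ht, EReal.coe_mul_top_of_pos hα, EReal.add_top_of_ne_bot (EReal.coe_ne_bot _),
      top_le_iff] at this
    have : ((1 / 2 * ‖x₀ - w‖ ^ 2 : ℝ) : EReal) + ((α * c : ℝ) : EReal) = ⊤ := by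
      rw [← this]; norm_cast
    exact (EReal.coe_ne_top _) (by exact_mod_cast this)
  exact ⟨(f u).toReal, (EReal.coe_toReal htop (hbot u)).symm⟩

lemma prox_unique {H : Type*} [NormedAddCommGroup H] [InnerProductSpace ℝ H]
    (f : H → EReal) (hprop : EProper f) (hconv : EConvexOn f)
    (α : ℝ) (hα : 0 < α) (w x u : H)
    (hx : IsProxPt f α w x) (hu : IsProxPt f α w u) : u = x := by
  obtain ⟨r, hr⟩ := prox_finite f hprop α hα w x hx
  obtain ⟨s, hs⟩ := prox_finite f hprop α hα w u hu
  set m := (1/2 : ℝ) • x + (1/2 : ℝ) • u with hm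
  have hconvm := hconv x u (1/2) (1/2) (by norm_num) (by norm_num) (by norm_num)
  rw [hr, hs] at hconvm
  have hmle : f m ≤ ((r/2 + s/2 : ℝ) : EReal) := by
    refine hconvm.trans_eq ?_
    norm_cast
    ring
  have hmt : f m ≠ ⊤ := fun h => by simp [h, top_le_iff] at hmle; exact (EReal.coe_ne_top _) hmle
  obtain ⟨t, ht⟩ : ∃ t : ℝ, f m = (t : EReal) := ⟨(f m).toReal, (EReal.coe_toReal hmt (hprop.1 m)).symm⟩
  have hts : t ≤ r/2 + s/2 := by rw [ht] at hmle; exact_mod_cast hmle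
  have h1 : 1 / 2 * ‖x - w‖ ^ 2 + α * r ≤ 1 / 2 * ‖m - w‖ ^ 2 + α * t := by
    have := hx m; rw [hr, ht] at this; exact_mod_cast this
  have h2 : 1 / 2 * ‖u - w‖ ^ 2 + α * s ≤ 1 / 2 * ‖x - w‖ ^ 2 + α * r := by
    have := hu x; rw [hr, hs] at this; exact_mod_cast this
  have key : ∀ a b : H, ‖(1/2:ℝ) • a + (1/2:ℝ) • b‖ ^ 2
      = 1/2 * ‖a‖ ^ 2 + 1/2 * ‖b‖ ^ 2 - 1/4 * ‖a - b‖ ^ 2 := by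
    intro a b
    have h3 := norm_add_sq_real ((1/2:ℝ) • a) ((1/2:ℝ) • b)
    have h4 := norm_sub_sq_real a b
    rw [real_inner_smul_left, real_inner_smul_right] at h3
    rw [norm_smul, norm_smul] at h3
    simp only [Real.norm_eq_abs] at h3
    rw [abs_of_pos (by norm_num : (0:ℝ) < 1/2)] at h3
    nlinarith [h3, h4]
  have hpar : ‖m - w‖ ^ 2 = 1/2 * ‖x - w‖ ^ 2 + 1/2 * ‖u - w‖ ^ 2 - 1/4 * ‖x - u‖ ^ 2 := by
    have e : m - w = (1/2 : ℝ) • (x - w) + (1/2 : ℝ) • (u - w) := by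
      rw [hm]; module
    have e2 : (x - w) - (u - w) = x - u := by abel
    rw [e, key, e2]
  have hd : ‖x - u‖ ^ 2 ≤ 0 := by nlinarith [mul_le_mul_of_nonneg_left hts hα.le]
  have : x - u = 0 := by
    have := norm_nonneg (x - u)
    have h0 : ‖x - u‖ = 0 := by nlinarith
    exact norm_eq_zero.mp h0
  rw [sub_eq_zero] at this
  exact this.symm

/-- a KKT point `(û, v̂, μ̂)` of the problem with constraint
`F(u,v) = G(u) − v = 0` (i.e. `0 ∈ ∂H(û) + DG(û)*μ̂`, `0 ∈ ∂J(v̂) − μ̂`, `G(û) = v̂`)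
is a fixed point of the preconditioned ADMM iteration of Algorithm 1: starting from
`(û, v̂, μ̂, μ̂)` the updates (with `A = DG(û)`, `B = −I`, `τ₂ = 1/δ`) return
`(û, v̂, μ̂, μ̂)`. -/
theorem kkt_point_is_fixed_point_of_algorithm
    {U V : Type*} [NormedAddCommGroup U] [InnerProductSpace ℝ U] [CompleteSpace U]
    [NormedAddCommGroup V] [InnerProductSpace ℝ V] [CompleteSpace V]
    (Hf : U → EReal) (J : V → EReal)
    (hHprop : EProper Hf) (hHconv : EConvexOn Hf) (hHlsc : LowerSemicontinuous Hf)
    (hJprop : EProper J) (hJconv : EConvexOn J) (hJlsc : LowerSemicontinuous J)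
    (G : U → V) (uhat : U) (vhat muhat : V)
    (A : U →L[ℝ] V) (hA : HasFDerivAt G A uhat)
    (δ τ₁ : ℝ) (hδ : 0 < δ) (hτ₁ : 0 < τ₁) (hstep : τ₁ * δ * ‖A‖ ^ 2 < 1)
    (hkkt₁ : -(A.adjoint muhat) ∈ ESubdiff Hf uhat)
    (hkkt₂ : muhat ∈ ESubdiff J vhat)
    (hkkt₃ : G uhat = vhat) :
    (∃ u' : U, IsProxPt Hf τ₁ (uhat - τ₁ • A.adjoint muhat) u') ∧
    (∀ u' : U, IsProxPt Hf τ₁ (uhat - τ₁ • A.adjoint muhat) u' →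
      (∃ v' : V, IsProxPt J (1 / δ) (vhat + (1 / δ) • (muhat + δ • (G u' - vhat))) v') ∧
      ∀ v' : V, IsProxPt J (1 / δ) (vhat + (1 / δ) • (muhat + δ • (G u' - vhat))) v' →
        u' = uhat ∧ v' = vhat ∧
        muhat + δ • (G u' - v') = muhat ∧
        (2 : ℝ) • (muhat + δ • (G u' - v')) - muhat = muhat) := by
  have hw₁ : uhat - τ₁ • A.adjoint muhat = uhat + τ₁ • (-(A.adjoint muhat)) := by
    rw [smul_neg, sub_eq_add_neg]
  have hxprox : IsProxPt Hf τ₁ (uhat - τ₁ • A.adjoint muhat) uhat := by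
    rw [hw₁]; exact prox_of_subgrad Hf hHprop τ₁ hτ₁ uhat _ hkkt₁
  refine ⟨⟨uhat, hxprox⟩, fun u' hu' => ?_⟩
  have hueq : u' = uhat := prox_unique Hf hHprop hHconv τ₁ hτ₁ _ uhat u' hxprox hu'
  subst hueq
  have hw₂ : vhat + (1/δ) • (muhat + δ • (G u' - vhat)) = vhat + (1/δ) • muhat := by
    rw [hkkt₃, sub_self, smul_zero, add_zero]
  have hvprox : IsProxPt J (1/δ) (vhat + (1/δ) • (muhat + δ • (G u' - vhat))) vhat := by
    rw [hw₂]; exact prox_of_subgrad J hJprop (1/δ) (by positivity) vhat muhat hkkt₂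
  refine ⟨⟨vhat, hvprox⟩, fun v' hv' => ?_⟩
  have hveq : v' = vhat := prox_unique J hJprop hJconv (1/δ) (by positivity) _ vhat v' hvprox hv'
  subst hveq
  have hmu : muhat + δ • (G u' - v') = muhat := by
    rw [hkkt₃, sub_self, smul_zero, add_zero]
  refine ⟨rfl, rfl, hmu, ?_⟩
  rw [hmu, two_smul, add_sub_cancel_right]
end
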